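/- arXiv:2010.06959 — 6 statements merged into one kernel-verified Lean document; each statement's English description precedes it below -/
import Mathlib

section
/- For every x = (x_1,…,x_N) ∈ (ℝⁿ)^N, the original non-smooth objective equals the minimum of the smooth surrogate plus a constant: f(x) = min { G(x,u) + Σ_{(i,j)∈E} d_{ij}² : u_{ij} ∈ B for every (i,j) ∈ E }, and this minimum is attained. -/
open scoped RealInnerProductSpace BigOperators
open Finset

/-- The smooth surrogate objective `G(x,u)`. -/
noncomputable def objG (n N m : ℕ)
    (E1 : Finset (Fin N × Fin N)) (E2 : Finset (Fin N × Fin m))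
    (a : Fin m → EuclideanSpace ℝ (Fin n))
    (d1 : Fin N × Fin N → ℝ) (d2 : Fin N × Fin m → ℝ)
    (x : Fin N → EuclideanSpace ℝ (Fin n))
    (u1 : Fin N × Fin N → EuclideanSpace ℝ (Fin n))
    (u2 : Fin N × Fin m → EuclideanSpace ℝ (Fin n)) : ℝ :=
  (∑ e ∈ E1, (‖x e.1 - x e.2‖ ^ 2 - 2 * d1 e * ⟪u1 e, x e.1 - x e.2⟫)) +
  ∑ e ∈ E2, (‖x e.1 - a e.2‖ ^ 2 - 2 * d2 e * ⟪u2 e, x e.1 - a e.2⟫)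

/-- The original non-smooth objective `f(x)`. -/
noncomputable def objf (n N m : ℕ)
    (E1 : Finset (Fin N × Fin N)) (E2 : Finset (Fin N × Fin m))
    (a : Fin m → EuclideanSpace ℝ (Fin n))
    (d1 : Fin N × Fin N → ℝ) (d2 : Fin N × Fin m → ℝ)
    (x : Fin N → EuclideanSpace ℝ (Fin n)) : ℝ :=
  (∑ e ∈ E1, (‖x e.1 - x e.2‖ - d1 e) ^ 2) +
  ∑ e ∈ E2, (‖x e.1 - a e.2‖ - d2 e) ^ 2

/-! Edge by edge, Cauchy–Schwarz gives `⟪u, v⟫ ≤ ‖v‖` for `‖u‖ ≤ 1`, hence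
`‖v‖² - 2d⟪u, v⟫ + d² ≥ ‖v‖² - 2d‖v‖ + d² = (‖v‖ - d)²` when `d ≥ 0`, with equality at
`u = ‖v‖⁻¹ • v`. Summing over the edges, `f(x)` bounds the surrogate from below and is attained. -/

section Surrogate

variable {E : Type*} [NormedAddCommGroup E] [InnerProductSpace ℝ E]

theorem sq_norm_sub_le_surrogate {v u : E} {d : ℝ} (hd : 0 ≤ d) (hu : ‖u‖ ≤ 1) :
    (‖v‖ - d) ^ 2 ≤ ‖v‖ ^ 2 - 2 * d * ⟪u, v⟫ + d ^ 2 := by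
  have hinner : ⟪u, v⟫ ≤ ‖v‖ :=
    (real_inner_le_norm u v).trans (mul_le_of_le_one_left (norm_nonneg v) hu)
  nlinarith [mul_le_mul_of_nonneg_left hinner hd]

theorem real_inner_inv_norm_smul_self (v : E) : ⟪‖v‖⁻¹ • v, v⟫ = ‖v‖ := by
  rcases eq_or_ne v 0 with rfl | hv
  · simp
  · rw [real_inner_smul_left, real_inner_self_eq_norm_sq]
    field_simp

theorem sq_norm_sub_eq_surrogate_inv_norm_smul (v : E) (d : ℝ) :
    (‖v‖ - d) ^ 2 = ‖v‖ ^ 2 - 2 * d * ⟪‖v‖⁻¹ • v, v⟫ + d ^ 2 := by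
  rw [real_inner_inv_norm_smul_self]
  ring

theorem isLeast_sum_surrogate {ι : Type*} (s : Finset ι) (v : ι → E) (d : ι → ℝ)
    (hd : ∀ i ∈ s, 0 ≤ d i) :
    IsLeast {c | ∃ u : ι → E, (∀ i ∈ s, ‖u i‖ ≤ 1) ∧
        c = ∑ i ∈ s, (‖v i‖ ^ 2 - 2 * d i * ⟪u i, v i⟫ + d i ^ 2)}
      (∑ i ∈ s, (‖v i‖ - d i) ^ 2) := by
  refine ⟨⟨fun i => ‖v i‖⁻¹ • v i, fun i _ => by simpa using inv_norm_smul_mem_unitClosedBall (v i),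
    sum_congr rfl fun i _ => sq_norm_sub_eq_surrogate_inv_norm_smul (v i) (d i)⟩, ?_⟩
  rintro c ⟨u, hu, rfl⟩
  exact sum_le_sum fun i hi => sq_norm_sub_le_surrogate (hd i hi) (hu i hi)

end Surrogate

theorem stmt0_general (n N m : ℕ)
    (E1 : Finset (Fin N × Fin N))
    (E2 : Finset (Fin N × Fin m))
    (a : Fin m → EuclideanSpace ℝ (Fin n))
    (d1 : Fin N × Fin N → ℝ) (d2 : Fin N × Fin m → ℝ)
    (hd1 : ∀ e ∈ E1, 0 ≤ d1 e) (hd2 : ∀ e ∈ E2, 0 ≤ d2 e)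
    (x : Fin N → EuclideanSpace ℝ (Fin n)) :
    IsLeast
      { c : ℝ |
        ∃ (u1 : Fin N × Fin N → EuclideanSpace ℝ (Fin n))
          (u2 : Fin N × Fin m → EuclideanSpace ℝ (Fin n)),
          (∀ e ∈ E1, ‖u1 e‖ ≤ 1) ∧ (∀ e ∈ E2, ‖u2 e‖ ≤ 1) ∧
          c = objG n N m E1 E2 a d1 d2 x u1 u2 +
                ((∑ e ∈ E1, d1 e ^ 2) + ∑ e ∈ E2, d2 e ^ 2) }
      (objf n N m E1 E2 a d1 d2 x) := by
  obtain ⟨⟨u1, hu1, hf1⟩, hlow1⟩ := isLeast_sum_surrogate E1 (fun e => x e.1 - x e.2) d1 hd1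
  obtain ⟨⟨u2, hu2, hf2⟩, hlow2⟩ := isLeast_sum_surrogate E2 (fun e => x e.1 - a e.2) d2 hd2
  refine ⟨⟨u1, u2, hu1, hu2, ?_⟩, ?_⟩
  · rw [objf, objG, hf1, hf2, sum_add_distrib, sum_add_distrib]
    ring
  · rintro c ⟨v1, v2, hv1, hv2, rfl⟩
    have h1 := hlow1 ⟨v1, hv1, rfl⟩
    have h2 := hlow2 ⟨v2, hv2, rfl⟩
    rw [sum_add_distrib] at h1 h2
    rw [objf, objG]
    linarith

/-- For every `x`, `f(x)` is the minimum (attained) of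
`G(x,u) + ∑_{(i,j)∈E} d_{ij}²` over all `u` with `u_{ij}` in the closed unit ball. -/
theorem stmt0 (n N m : ℕ) (hn : 1 ≤ n) (hN : 1 ≤ N)
    (E1 : Finset (Fin N × Fin N)) (hE1 : ∀ e ∈ E1, e.1 < e.2)
    (E2 : Finset (Fin N × Fin m))
    (a : Fin m → EuclideanSpace ℝ (Fin n))
    (d1 : Fin N × Fin N → ℝ) (d2 : Fin N × Fin m → ℝ)
    (hd1 : ∀ e ∈ E1, 0 ≤ d1 e) (hd2 : ∀ e ∈ E2, 0 ≤ d2 e)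
    (x : Fin N → EuclideanSpace ℝ (Fin n)) :
    IsLeast
      { c : ℝ |
        ∃ (u1 : Fin N × Fin N → EuclideanSpace ℝ (Fin n))
          (u2 : Fin N × Fin m → EuclideanSpace ℝ (Fin n)),
          (∀ e ∈ E1, ‖u1 e‖ ≤ 1) ∧ (∀ e ∈ E2, ‖u2 e‖ ≤ 1) ∧
          c = objG n N m E1 E2 a d1 d2 x u1 u2 +
                ((∑ e ∈ E1, d1 e ^ 2) + ∑ e ∈ E2, d2 e ^ 2) }
      (objf n N m E1 E2 a d1 d2 x) :=
  stmt0_general n N m E1 E2 a d1 d2 hd1 hd2 x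
end

section
/- (Proposition 1.) Assume d_{ij} > 0 for every edge. Let x* ∈ (ℝⁿ)^N and let u* assign to each edge (i,j) ∈ E a vector u*_{ij} ∈ B, with the convention u*_{ji} = −u*_{ij} for (i,j) ∈ E1, and set v*_{ij} = x*_i − x*_j for (i,j) ∈ E1 and v*_{ij} = x*_i − a_j for (i,j) ∈ E2. Suppose (x*,u*) is a critical point of the reformulated problem, i.e.: (i) for every edge (i,j) ∈ E and every w ∈ B, ⟨2 d_{ij} v*_{ij}, w − u*_{ij}⟩ ≤ 0 (the normal-cone conditions (8)–(9)); and (ii) for every i ∈ V, Σ_{j∈N(i)∩V}(x*_i − x*_j − d_{ij} u*_{ij}) + Σ_{j∈N(i)∩A}(x*_i − a_j − d_{ij} u*_{ij}) = 0 (stationarity condition (7)). Then x* is a critical point of the original objective f; concretely, for every edge (i,j) ∈ E one has ⟨u*_{ij}, v*_{ij}⟩ = ‖v*_{ij}‖ with ‖u*_{ij}‖ ≤ 1, so each u*_{ij} is a subgradient of the Euclidean norm at v*_{ij}, and the equations (ii) witness that 0 belongs to the subdifferential of f at x*. -/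
open scoped RealInnerProductSpace

/-! The normal-cone condition says that `u` maximises `⟪v, ·⟫` over the unit ball. That maximum
is `‖v‖` (attained at `‖v‖⁻¹ • v`), so `⟪u, v⟫ = ‖v‖`, i.e. `u` is a subgradient of the norm
at `v`; the stationarity equations are then exactly `0 ∈ ∂f(x*)`. -/

section NormalCone

variable {E : Type*} [NormedAddCommGroup E] [InnerProductSpace ℝ E]

theorem real_inner_eq_norm_of_forall_inner_sub_nonpos {u v : E} (hu : ‖u‖ ≤ 1)
    (h : ∀ w : E, ‖w‖ ≤ 1 → ⟪v, w - u⟫ ≤ 0) : ⟪u, v⟫ = ‖v‖ := by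
  rw [real_inner_comm]
  refine le_antisymm ?_ ?_
  · calc ⟪v, u⟫ ≤ ‖v‖ * ‖u‖ := real_inner_le_norm v u
      _ ≤ ‖v‖ := mul_le_of_le_one_right (norm_nonneg v) hu
  · rcases eq_or_ne v 0 with rfl | hv
    · simp
    have hv' : ‖v‖ ≠ 0 := norm_ne_zero_iff.mpr hv
    have hunit : ‖‖v‖⁻¹ • v‖ ≤ 1 := by
      rw [norm_smul, norm_inv, norm_norm, inv_mul_cancel₀ hv']
    have hmax := h _ hunit
    rw [inner_sub_right, real_inner_smul_right, real_inner_self_eq_norm_sq] at hmax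
    have hself : ‖v‖⁻¹ * ‖v‖ ^ 2 = ‖v‖ := by field_simp
    linarith

theorem real_inner_eq_norm_of_forall_inner_smul_sub_nonpos {u v : E} {c : ℝ} (hc : 0 < c)
    (hu : ‖u‖ ≤ 1) (h : ∀ w : E, ‖w‖ ≤ 1 → ⟪c • v, w - u⟫ ≤ 0) : ⟪u, v⟫ = ‖v‖ :=
  real_inner_eq_norm_of_forall_inner_sub_nonpos hu fun w hw =>
    nonpos_of_mul_nonpos_right (real_inner_smul_left v (w - u) c ▸ h w hw) hc

end NormalCone

/-- The convention `u*_{ji} = −u*_{ij}` for sensor–sensor edges is encoded by the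
`+ d_{ij} • u*_{ij}` sign in the sums over edges whose second endpoint is `i`. -/
theorem stmt2_general (n N m : ℕ)
    (E1 : Finset (Fin N × Fin N))
    (E2 : Finset (Fin N × Fin m))
    (a : Fin m → EuclideanSpace ℝ (Fin n))
    (d1 : Fin N × Fin N → ℝ) (d2 : Fin N × Fin m → ℝ)
    (hd1 : ∀ e ∈ E1, 0 < d1 e) (hd2 : ∀ e ∈ E2, 0 < d2 e)
    (x : Fin N → EuclideanSpace ℝ (Fin n))
    (u1 : Fin N × Fin N → EuclideanSpace ℝ (Fin n))
    (u2 : Fin N × Fin m → EuclideanSpace ℝ (Fin n))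
    (hball1 : ∀ e ∈ E1, ‖u1 e‖ ≤ 1) (hball2 : ∀ e ∈ E2, ‖u2 e‖ ≤ 1)
    -- (i) normal-cone conditions (8)–(9):
    (hNC1 : ∀ e ∈ E1, ∀ w : EuclideanSpace ℝ (Fin n), ‖w‖ ≤ 1 →
      ⟪(2 * d1 e) • (x e.1 - x e.2), w - u1 e⟫ ≤ 0)
    (hNC2 : ∀ e ∈ E2, ∀ w : EuclideanSpace ℝ (Fin n), ‖w‖ ≤ 1 →
      ⟪(2 * d2 e) • (x e.1 - a e.2), w - u2 e⟫ ≤ 0)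
    -- (ii) stationarity condition (7), for every sensor `i`:
    (hstat : ∀ i : Fin N,
      (∑ e ∈ E1.filter (fun e => e.1 = i), (x i - x e.2 - d1 e • u1 e)) +
      (∑ e ∈ E1.filter (fun e => e.2 = i), (x i - x e.1 + d1 e • u1 e)) +
      (∑ e ∈ E2.filter (fun e => e.1 = i), (x i - a e.2 - d2 e • u2 e)) = 0) :
    -- conclusion: each `u*_{ij}` is a subgradient of `‖·‖` at `v*_{ij}`,
    -- and together with the stationarity equations this witnesses that
    -- `0` belongs to the subdifferential of `f` at `x*`.
    (∀ e ∈ E1, ‖u1 e‖ ≤ 1 ∧ ⟪u1 e, x e.1 - x e.2⟫ = ‖x e.1 - x e.2‖) ∧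
    (∀ e ∈ E2, ‖u2 e‖ ≤ 1 ∧ ⟪u2 e, x e.1 - a e.2⟫ = ‖x e.1 - a e.2‖) ∧
    (∀ i : Fin N,
      (∑ e ∈ E1.filter (fun e => e.1 = i), (x i - x e.2 - d1 e • u1 e)) +
      (∑ e ∈ E1.filter (fun e => e.2 = i), (x i - x e.1 + d1 e • u1 e)) +
      (∑ e ∈ E2.filter (fun e => e.1 = i), (x i - a e.2 - d2 e • u2 e)) = 0) := by
  refine ⟨fun e he => ⟨hball1 e he, ?_⟩, fun e he => ⟨hball2 e he, ?_⟩, hstat⟩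
  · exact real_inner_eq_norm_of_forall_inner_smul_sub_nonpos (by linarith [hd1 e he])
      (hball1 e he) (hNC1 e he)
  · exact real_inner_eq_norm_of_forall_inner_smul_sub_nonpos (by linarith [hd2 e he])
      (hball2 e he) (hNC2 e he)

/-- Proposition 1: if `(x*, u*)` is a critical point of the reformulated
problem (normal-cone conditions for the `u`-block and stationarity in the
`x`-block), then `x*` is a critical point of the original objective `f`;
concretely, each `u*_{ij}` is a subgradient of the Euclidean norm at
`v*_{ij}` (i.e. `⟪u*_{ij}, v*_{ij}⟫ = ‖v*_{ij}‖` with `‖u*_{ij}‖ ≤ 1`), and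
the stationarity equations witness `0 ∈ ∂f(x*)`.
The convention `u*_{ji} = −u*_{ij}` for sensor–sensor edges is encoded by the
`+ d_{ij} • u*_{ij}` sign in the sums over edges whose second endpoint is `i`. -/
theorem stmt2 (n N m : ℕ) (hn : 1 ≤ n) (hN : 1 ≤ N)
    (E1 : Finset (Fin N × Fin N)) (hE1 : ∀ e ∈ E1, e.1 < e.2)
    (E2 : Finset (Fin N × Fin m))
    (a : Fin m → EuclideanSpace ℝ (Fin n))
    (d1 : Fin N × Fin N → ℝ) (d2 : Fin N × Fin m → ℝ)
    (hd1 : ∀ e ∈ E1, 0 < d1 e) (hd2 : ∀ e ∈ E2, 0 < d2 e)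
    (x : Fin N → EuclideanSpace ℝ (Fin n))
    (u1 : Fin N × Fin N → EuclideanSpace ℝ (Fin n))
    (u2 : Fin N × Fin m → EuclideanSpace ℝ (Fin n))
    (hball1 : ∀ e ∈ E1, ‖u1 e‖ ≤ 1) (hball2 : ∀ e ∈ E2, ‖u2 e‖ ≤ 1)
    -- (i) normal-cone conditions (8)–(9):
    (hNC1 : ∀ e ∈ E1, ∀ w : EuclideanSpace ℝ (Fin n), ‖w‖ ≤ 1 →
      ⟪(2 * d1 e) • (x e.1 - x e.2), w - u1 e⟫ ≤ 0)
    (hNC2 : ∀ e ∈ E2, ∀ w : EuclideanSpace ℝ (Fin n), ‖w‖ ≤ 1 →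
      ⟪(2 * d2 e) • (x e.1 - a e.2), w - u2 e⟫ ≤ 0)
    -- (ii) stationarity condition (7), for every sensor `i`:
    (hstat : ∀ i : Fin N,
      (∑ e ∈ E1.filter (fun e => e.1 = i), (x i - x e.2 - d1 e • u1 e)) +
      (∑ e ∈ E1.filter (fun e => e.2 = i), (x i - x e.1 + d1 e • u1 e)) +
      (∑ e ∈ E2.filter (fun e => e.1 = i), (x i - a e.2 - d2 e • u2 e)) = 0) :
    -- conclusion: each `u*_{ij}` is a subgradient of `‖·‖` at `v*_{ij}`,
    -- and together with the stationarity equations this witnesses that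
    -- `0` belongs to the subdifferential of `f` at `x*`.
    (∀ e ∈ E1, ‖u1 e‖ ≤ 1 ∧ ⟪u1 e, x e.1 - x e.2⟫ = ‖x e.1 - x e.2‖) ∧
    (∀ e ∈ E2, ‖u2 e‖ ≤ 1 ∧ ⟪u2 e, x e.1 - a e.2⟫ = ‖x e.1 - a e.2‖) ∧
    (∀ i : Fin N,
      (∑ e ∈ E1.filter (fun e => e.1 = i), (x i - x e.2 - d1 e • u1 e)) +
      (∑ e ∈ E1.filter (fun e => e.2 = i), (x i - x e.1 + d1 e • u1 e)) +
      (∑ e ∈ E2.filter (fun e => e.1 = i), (x i - a e.2 - d2 e • u2 e)) = 0) :=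
  stmt2_general n N m E1 E2 a d1 d2 hd1 hd2 x u1 u2 hball1 hball2 hNC1 hNC2 hstat
end

section
/- (Proposition 2(ii).) Under Assumption 1, for every fixed u (assigning u_{ij} ∈ ℝⁿ to each edge), the function x ↦ G(x,u) on (ℝⁿ)^N is strongly convex, i.e., there exists σ > 0 such that x ↦ G(x,u) − (σ/2)‖x‖² is convex. -/
open scoped RealInnerProductSpace BigOperators
open Finset

/-- The relation of the network graph on vertices `V ∪ A = Fin N ⊕ Fin m`. -/
def netRel (N m : ℕ) (E1 : Finset (Fin N × Fin N)) (E2 : Finset (Fin N × Fin m)) :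
    (Fin N ⊕ Fin m) → (Fin N ⊕ Fin m) → Prop := fun p q =>
  match p, q with
  | Sum.inl i, Sum.inl j => (i, j) ∈ E1
  | Sum.inl i, Sum.inr j => (i, j) ∈ E2
  | _, _ => False

/-!
`x ↦ G(x,u)` is quadratic with quadratic part the grounded Laplacian form
`Q(z) = ∑_{E1} ‖z_i - z_j‖² + ∑_{E2} ‖z_i‖²`, in the sense that
`G(tx + sy) = t G(x) + s G(y) - t s Q(x - y)` whenever `t + s = 1`; likewise `∑ ‖x_i‖²` has
quadratic part `∑ ‖z_i‖²`. So `G - (σ/2) ∑ ‖x_i‖²` is convex as soon as `(σ/2) ∑ ‖z_i‖² ≤ Q(z)`.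
If `Q(z) = 0` then `z` is constant along sensor–sensor edges and vanishes at every sensor adjacent
to an anchor, so `z = 0` because the network is connected and has an anchor. Being continuous and
2-homogeneous, `Q` is therefore bounded below by a positive multiple of `‖z‖²` on the unit sphere.
-/

section MixDefect

variable {E F : Type*} [AddCommGroup E] [Module ℝ E] [AddCommGroup F] [Module ℝ F]

def HasMixDefect (f q : E → ℝ) : Prop :=
  ∀ (x y : E) (t s : ℝ), t + s = 1 → f (t • x + s • y) = t * f x + s * f y - t * s * q (x - y)

namespace HasMixDefect

variable {f g q r : E → ℝ}

theorem congr {f' q' : E → ℝ} (h : HasMixDefect f q) (hf : ∀ x, f x = f' x)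
    (hq : ∀ z, q z = q' z) : HasMixDefect f' q' := by
  rwa [← funext hf, ← funext hq]

theorem convexOn (h : HasMixDefect f q) (hq : ∀ z, 0 ≤ q z) : ConvexOn ℝ Set.univ f := by
  refine ⟨convex_univ, fun x _ y _ t s ht hs hts => ?_⟩
  have := mul_nonneg (mul_nonneg ht hs) (hq (x - y))
  rw [h x y t s hts, smul_eq_mul, smul_eq_mul]
  linarith

theorem add (hf : HasMixDefect f q) (hg : HasMixDefect g r) :
    HasMixDefect (fun x => f x + g x) (fun z => q z + r z) := fun x y t s hts => by
  simp only [hf x y t s hts, hg x y t s hts]; ring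

theorem sub (hf : HasMixDefect f q) (hg : HasMixDefect g r) :
    HasMixDefect (fun x => f x - g x) (fun z => q z - r z) := fun x y t s hts => by
  simp only [hf x y t s hts, hg x y t s hts]; ring

theorem const_mul (hf : HasMixDefect f q) (c : ℝ) :
    HasMixDefect (fun x => c * f x) (fun z => c * q z) := fun x y t s hts => by
  simp only [hf x y t s hts]; ring

theorem sub_linearMap (hf : HasMixDefect f q) (ℓ : E →ₗ[ℝ] ℝ) :
    HasMixDefect (fun x => f x - ℓ x) q := fun x y t s hts => by
  simp only [hf x y t s hts, map_add, map_smul, smul_eq_mul]; ring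

theorem sum {ι : Type*} (I : Finset ι) {f q : ι → E → ℝ}
    (h : ∀ i ∈ I, HasMixDefect (f i) (q i)) :
    HasMixDefect (fun x => ∑ i ∈ I, f i x) (fun z => ∑ i ∈ I, q i z) := fun x y t s hts => by
  simp only [Finset.sum_congr rfl fun i hi => h i hi x y t s hts, Finset.sum_sub_distrib,
    Finset.sum_add_distrib, Finset.mul_sum]

theorem comp_affineMap {f q : F → ℝ} (hf : HasMixDefect f q) (A : E →ᵃ[ℝ] F) :
    HasMixDefect (fun x => f (A x)) (fun z => q (A.linear z)) := fun x y t s hts => by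
  dsimp only
  rw [Convex.combo_affine_apply hts, hf _ _ t s hts, ← vsub_eq_sub x y, A.linearMap_vsub,
    vsub_eq_sub]

end HasMixDefect

end MixDefect

theorem hasMixDefect_norm_sq {F : Type*} [NormedAddCommGroup F] [InnerProductSpace ℝ F] :
    HasMixDefect (fun v : F => ‖v‖ ^ 2) (fun v => ‖v‖ ^ 2) := fun v w t s hts => by
  simp only [← real_inner_self_eq_norm_sq, inner_add_add_self, inner_sub_sub_self,
    real_inner_smul_left, real_inner_smul_right, real_inner_comm v w]
  linear_combination (t * ⟪v, v⟫ + s * ⟪w, w⟫) * hts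

theorem hasMixDefect_sum_norm_sq {ι F : Type*} [Fintype ι] [NormedAddCommGroup F]
    [InnerProductSpace ℝ F] :
    HasMixDefect (fun x : ι → F => ∑ i, ‖x i‖ ^ 2) (fun z => ∑ i, ‖z i‖ ^ 2) :=
  HasMixDefect.sum _ fun i _ =>
    hasMixDefect_norm_sq.comp_affineMap
      (LinearMap.proj (R := ℝ) (φ := fun _ : ι => F) i).toAffineMap

theorem exists_pos_mul_norm_sq_le {E : Type*} [NormedAddCommGroup E] [NormedSpace ℝ E]
    [ProperSpace E] {Q : E → ℝ} (hQ : Continuous Q) (hsmul : ∀ (c : ℝ) z, Q (c • z) = c ^ 2 * Q z)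
    (hpos : ∀ z ≠ 0, 0 < Q z) : ∃ c > 0, ∀ z, c * ‖z‖ ^ 2 ≤ Q z := by
  have hQ0 : Q 0 = 0 := by simpa using hsmul 0 0
  rcases subsingleton_or_nontrivial E with hE | hE
  · exact ⟨1, one_pos, fun z => by simp [Subsingleton.elim z 0, hQ0]⟩
  obtain ⟨z₀, hz₀, hmin⟩ := (isCompact_sphere (0 : E) 1).exists_isMinOn
    (NormedSpace.sphere_nonempty.mpr zero_le_one) hQ.continuousOn
  refine ⟨Q z₀, hpos z₀ (ne_zero_of_mem_unit_sphere ⟨z₀, hz₀⟩), fun z => ?_⟩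
  rcases eq_or_ne z 0 with rfl | hz
  · simp [hQ0]
  have hz' : 0 < ‖z‖ := norm_pos_iff.mpr hz
  have hmin_z : Q z₀ ≤ Q (‖z‖⁻¹ • z) := hmin (by simp [norm_smul, hz'.ne'])
  calc Q z₀ * ‖z‖ ^ 2 ≤ Q (‖z‖⁻¹ • z) * ‖z‖ ^ 2 := by gcongr
    _ = Q z := by rw [hsmul]; field_simp

theorem SimpleGraph.Reachable.eq_of_forall_adj {V β : Type*} {G : SimpleGraph V} {f : V → β}
    (h : ∀ v w, G.Adj v w → f v = f w) {u v : V} (huv : G.Reachable u v) : f u = f v := by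
  obtain ⟨p⟩ := huv
  induction p with
  | nil => rfl
  | cons hadj _ ih => exact (h _ _ hadj).trans ih

section NetQuadForm

variable {N m : ℕ} {F : Type*} [NormedAddCommGroup F]

noncomputable def netQuadForm (E1 : Finset (Fin N × Fin N)) (E2 : Finset (Fin N × Fin m))
    (z : Fin N → F) : ℝ :=
  (∑ e ∈ E1, ‖z e.1 - z e.2‖ ^ 2) + ∑ e ∈ E2, ‖z e.1‖ ^ 2

variable (E1 : Finset (Fin N × Fin N)) (E2 : Finset (Fin N × Fin m))

theorem continuous_netQuadForm : Continuous (netQuadForm (F := F) E1 E2) := by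
  unfold netQuadForm
  fun_prop

theorem netQuadForm_eq_zero_iff (z : Fin N → F) :
    netQuadForm E1 E2 z = 0 ↔ (∀ e ∈ E1, z e.1 = z e.2) ∧ ∀ e ∈ E2, z e.1 = 0 := by
  simp (disch := intros; positivity) [netQuadForm, add_eq_zero_iff_of_nonneg,
    Finset.sum_eq_zero_iff_of_nonneg, sub_eq_zero]

theorem netQuadForm_pos (hconn : (SimpleGraph.fromRel (netRel N m E1 E2)).Connected)
    (hm : 1 ≤ m) {z : Fin N → F} (hz : z ≠ 0) : 0 < netQuadForm E1 E2 z := by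
  have hnonneg : 0 ≤ netQuadForm E1 E2 z := by unfold netQuadForm; positivity
  refine hnonneg.lt_of_ne' fun h => hz ?_
  obtain ⟨hE1, hE2⟩ := (netQuadForm_eq_zero_iff E1 E2 z).mp h
  have hadj : ∀ p q, (SimpleGraph.fromRel (netRel N m E1 E2)).Adj p q →
      Sum.elim z 0 p = Sum.elim z 0 q := by
    rintro (i | i) (j | j) ⟨-, (h | h)⟩ <;> simp only [netRel] at h
    exacts [hE1 _ h, (hE1 _ h).symm, hE2 _ h, (hE2 _ h).symm]
  funext i
  exact (hconn.preconnected (Sum.inl i) (Sum.inr ⟨0, hm⟩)).eq_of_forall_adj hadj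

variable [NormedSpace ℝ F]

theorem netQuadForm_smul (c : ℝ) (z : Fin N → F) :
    netQuadForm E1 E2 (c • z) = c ^ 2 * netQuadForm E1 E2 z := by
  simp only [netQuadForm, Pi.smul_apply, ← smul_sub, norm_smul, mul_pow, Real.norm_eq_abs, sq_abs,
    ← Finset.mul_sum, mul_add]

end NetQuadForm

theorem exists_pos_mul_sum_norm_sq_le_netQuadForm {N m : ℕ} {F : Type*} [NormedAddCommGroup F]
    [NormedSpace ℝ F] [FiniteDimensional ℝ F]
    (E1 : Finset (Fin N × Fin N)) (E2 : Finset (Fin N × Fin m))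
    (hconn : (SimpleGraph.fromRel (netRel N m E1 E2)).Connected) (hm : 1 ≤ m) :
    ∃ c > 0, ∀ z : Fin N → F, c * ∑ i, ‖z i‖ ^ 2 ≤ netQuadForm E1 E2 z := by
  obtain ⟨c, hc, h⟩ := exists_pos_mul_norm_sq_le
    (Q := fun z : PiLp 2 (fun _ : Fin N => F) => netQuadForm E1 E2 z.ofLp)
    ((continuous_netQuadForm E1 E2).comp (PiLp.continuous_ofLp 2 _))
    (fun c z => netQuadForm_smul E1 E2 c z.ofLp)
    (fun z hz => netQuadForm_pos E1 E2 hconn hm (by simpa using hz))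
  exact ⟨c, hc, fun z => by simpa [PiLp.norm_sq_eq_of_L2] using h (WithLp.toLp 2 z)⟩

theorem hasMixDefect_objG (n N m : ℕ) (E1 : Finset (Fin N × Fin N)) (E2 : Finset (Fin N × Fin m))
    (a : Fin m → EuclideanSpace ℝ (Fin n)) (d1 : Fin N × Fin N → ℝ) (d2 : Fin N × Fin m → ℝ)
    (u1 : Fin N × Fin N → EuclideanSpace ℝ (Fin n))
    (u2 : Fin N × Fin m → EuclideanSpace ℝ (Fin n)) :
    HasMixDefect (fun x => objG n N m E1 E2 a d1 d2 x u1 u2) (netQuadForm E1 E2) := by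
  have edge (u : EuclideanSpace ℝ (Fin n)) (d : ℝ) :
      HasMixDefect (fun v => ‖v‖ ^ 2 - 2 * d * ⟪u, v⟫) (fun v => ‖v‖ ^ 2) :=
    hasMixDefect_norm_sq.sub_linearMap ((2 * d) • innerₗ _ u)
  let π (i : Fin N) : (Fin N → EuclideanSpace ℝ (Fin n)) →ₗ[ℝ] EuclideanSpace ℝ (Fin n) :=
    LinearMap.proj i
  refine ((HasMixDefect.sum E1 fun e _ => (edge (u1 e) (d1 e)).comp_affineMap
      (π e.1 - π e.2).toAffineMap).add
    (HasMixDefect.sum E2 fun e _ => (edge (u2 e) (d2 e)).comp_affineMap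
      ((π e.1).toAffineMap - AffineMap.const ℝ _ (a e.2)))).congr
      (fun x => ?_) (fun z => ?_)
  · rfl
  · simp [netQuadForm, π]

/-- `∑ i, ‖x i‖ ^ 2` is the squared Euclidean norm of the concatenated vector `x ∈ (ℝⁿ)ᴺ`. -/
theorem stmt6_general (n N m : ℕ)
    (E1 : Finset (Fin N × Fin N))
    (E2 : Finset (Fin N × Fin m))
    (a : Fin m → EuclideanSpace ℝ (Fin n))
    (d1 : Fin N × Fin N → ℝ) (d2 : Fin N × Fin m → ℝ)
    (hconn : (SimpleGraph.fromRel (netRel N m E1 E2)).Connected)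
    (hm : 1 ≤ m)
    (u1 : Fin N × Fin N → EuclideanSpace ℝ (Fin n))
    (u2 : Fin N × Fin m → EuclideanSpace ℝ (Fin n)) :
    ∃ σ : ℝ, 0 < σ ∧
      ConvexOn ℝ Set.univ
        (fun x : Fin N → EuclideanSpace ℝ (Fin n) =>
          objG n N m E1 E2 a d1 d2 x u1 u2 - σ / 2 * ∑ i, ‖x i‖ ^ 2) := by
  obtain ⟨c, hc, hcoercive⟩ :=
    exists_pos_mul_sum_norm_sq_le_netQuadForm (F := EuclideanSpace ℝ (Fin n)) E1 E2 hconn hm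
  refine ⟨2 * c, by positivity, ?_⟩
  refine ((hasMixDefect_objG n N m E1 E2 a d1 d2 u1 u2).sub
    (hasMixDefect_sum_norm_sq.const_mul _)).convexOn fun z => ?_
  have hz := hcoercive z
  simp only [mul_div_cancel_left₀ c two_ne_zero]
  linarith

/-- Proposition 2(ii): under Assumption 1, for every fixed `u` the function
`x ↦ G(x,u)` is strongly convex: there is `σ > 0` such that
`x ↦ G(x,u) − (σ/2)‖x‖²` is convex (`‖x‖² = ∑ i, ‖x_i‖²` is the squared
Euclidean norm of the concatenated vector). -/
theorem stmt6 (n N m : ℕ) (hn : 1 ≤ n) (hN : 1 ≤ N)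
    (E1 : Finset (Fin N × Fin N)) (hE1 : ∀ e ∈ E1, e.1 < e.2)
    (E2 : Finset (Fin N × Fin m))
    (a : Fin m → EuclideanSpace ℝ (Fin n))
    (d1 : Fin N × Fin N → ℝ) (d2 : Fin N × Fin m → ℝ)
    (hd1 : ∀ e ∈ E1, 0 ≤ d1 e) (hd2 : ∀ e ∈ E2, 0 ≤ d2 e)
    (hconn : (SimpleGraph.fromRel (netRel N m E1 E2)).Connected)
    (hm : 1 ≤ m)
    (u1 : Fin N × Fin N → EuclideanSpace ℝ (Fin n))
    (u2 : Fin N × Fin m → EuclideanSpace ℝ (Fin n)) :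
    ∃ σ : ℝ, 0 < σ ∧
      ConvexOn ℝ Set.univ
        (fun x : Fin N → EuclideanSpace ℝ (Fin n) =>
          objG n N m E1 E2 a d1 d2 x u1 u2 - σ / 2 * ∑ i, ‖x i‖ ^ 2) :=
  stmt6_general n N m E1 E2 a d1 d2 hconn hm u1 u2
end

section
/- (Proposition 2(iii).) Under Assumption 1, the constrained surrogate is coercive: for every sequence of pairs (x^k, u^k) with u^k_{ij} ∈ B for every edge and every k, if ‖(x^k,u^k)‖ → ∞ then G(x^k,u^k) → ∞. -/
open scoped RealInnerProductSpace BigOperators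
open Finset Filter

section WalkBound

variable {V E : Type*} [SeminormedAddCommGroup E] {G : SimpleGraph V}

theorem SimpleGraph.Walk.norm_sub_le_length_mul {p : V → E} {r : ℝ}
    (hr : ∀ ⦃v w⦄, G.Adj v w → ‖p v - p w‖ ≤ r) {v w : V} (q : G.Walk v w) :
    ‖p v - p w‖ ≤ q.length * r := by
  induction q with
  | nil => simp
  | @cons u u' w h q ih =>
    calc ‖p u - p w‖ ≤ ‖p u - p u'‖ + ‖p u' - p w‖ := norm_sub_le_norm_sub_add_norm_sub ..
      _ ≤ r + q.length * r := add_le_add (hr h) ih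
      _ = (q.cons h).length * r := by rw [SimpleGraph.Walk.length_cons]; push_cast; ring

theorem SimpleGraph.Reachable.norm_sub_le_dist_mul {p : V → E} {r : ℝ}
    (hr : ∀ ⦃v w⦄, G.Adj v w → ‖p v - p w‖ ≤ r) {v w : V} (h : G.Reachable v w) :
    ‖p v - p w‖ ≤ G.dist v w * r := by
  obtain ⟨q, hq⟩ := h.exists_walk_length_eq_dist
  exact hq ▸ q.norm_sub_le_length_mul hr

end WalkBound

theorem norm_sq_div_two_sub_le_of_norm_le_one {F : Type*} [NormedAddCommGroup F]
    [InnerProductSpace ℝ F] {u v : F} {d : ℝ} (hd : 0 ≤ d) (hu : ‖u‖ ≤ 1) :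
    ‖v‖ ^ 2 / 2 - 2 * d ^ 2 ≤ ‖v‖ ^ 2 - 2 * d * ⟪u, v⟫ := by
  have hinner : ⟪u, v⟫ ≤ ‖v‖ :=
    (real_inner_le_norm u v).trans (mul_le_of_le_one_left (norm_nonneg v) hu)
  nlinarith [sq_nonneg (‖v‖ - 2 * d), mul_le_mul_of_nonneg_left hinner hd]

theorem sum_norm_sq_le_card {ι F : Type*} [SeminormedAddCommGroup F] {s : Finset ι} {u : ι → F}
    (hu : ∀ e ∈ s, ‖u e‖ ≤ 1) : ∑ e ∈ s, ‖u e‖ ^ 2 ≤ s.card := by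
  simpa using sum_le_sum fun e he =>
    pow_le_one₀ (n := 2) (norm_nonneg (u e)) (hu e he)

section Network

variable {n N m : ℕ} (E1 : Finset (Fin N × Fin N)) (E2 : Finset (Fin N × Fin m))
  (a : Fin m → EuclideanSpace ℝ (Fin n))

noncomputable def edgeEnergy (x : Fin N → EuclideanSpace ℝ (Fin n)) : ℝ :=
  (∑ e ∈ E1, ‖x e.1 - x e.2‖ ^ 2) + ∑ e ∈ E2, ‖x e.1 - a e.2‖ ^ 2

theorem edgeEnergy_nonneg (x : Fin N → EuclideanSpace ℝ (Fin n)) : 0 ≤ edgeEnergy E1 E2 a x :=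
  add_nonneg (sum_nonneg fun _ _ => sq_nonneg _) (sum_nonneg fun _ _ => sq_nonneg _)

theorem norm_sub_sq_le_edgeEnergy (x : Fin N → EuclideanSpace ℝ (Fin n))
    {v w : Fin N ⊕ Fin m} (h : netRel N m E1 E2 v w) :
    ‖Sum.elim x a v - Sum.elim x a w‖ ^ 2 ≤ edgeEnergy E1 E2 a x := by
  have h1 := sum_nonneg fun (e : Fin N × Fin N) (_ : e ∈ E1) => sq_nonneg ‖x e.1 - x e.2‖
  have h2 := sum_nonneg fun (e : Fin N × Fin m) (_ : e ∈ E2) => sq_nonneg ‖x e.1 - a e.2‖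
  rcases v with i | i <;> rcases w with j | j <;> simp only [netRel] at h
  · have := single_le_sum (f := fun e : Fin N × Fin N => ‖x e.1 - x e.2‖ ^ 2)
      (fun _ _ => sq_nonneg _) h
    simp only [Sum.elim_inl, edgeEnergy] at this ⊢
    linarith
  · have := single_le_sum (f := fun e : Fin N × Fin m => ‖x e.1 - a e.2‖ ^ 2)
      (fun _ _ => sq_nonneg _) h
    simp only [Sum.elim_inl, Sum.elim_inr, edgeEnergy] at this ⊢
    linarith

theorem norm_sub_le_sqrt_edgeEnergy_of_adj (x : Fin N → EuclideanSpace ℝ (Fin n))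
    ⦃v w : Fin N ⊕ Fin m⦄ (h : (SimpleGraph.fromRel (netRel N m E1 E2)).Adj v w) :
    ‖Sum.elim x a v - Sum.elim x a w‖ ≤ √(edgeEnergy E1 E2 a x) := by
  refine Real.le_sqrt_of_sq_le ?_
  rcases h.2 with h | h
  · exact norm_sub_sq_le_edgeEnergy E1 E2 a x h
  · rw [norm_sub_rev]; exact norm_sub_sq_le_edgeEnergy E1 E2 a x h

theorem exists_sum_norm_sq_le_edgeEnergy
    (hconn : (SimpleGraph.fromRel (netRel N m E1 E2)).Connected) (j₀ : Fin m) :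
    ∃ c₁ c₂ : ℝ, ∀ x : Fin N → EuclideanSpace ℝ (Fin n),
      ∑ i, ‖x i‖ ^ 2 ≤ c₁ + c₂ * edgeEnergy E1 E2 a x := by
  set L : Fin N → ℝ := fun i =>
    (SimpleGraph.fromRel (netRel N m E1 E2)).dist (Sum.inl i) (Sum.inr j₀)
  refine ⟨∑ _i : Fin N, 2 * ‖a j₀‖ ^ 2, ∑ i, 2 * L i ^ 2, fun x => ?_⟩
  have hF := edgeEnergy_nonneg E1 E2 a x
  have hbound (i : Fin N) :
      ‖x i‖ ^ 2 ≤ 2 * ‖a j₀‖ ^ 2 + 2 * L i ^ 2 * edgeEnergy E1 E2 a x := by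
    have hwalk : ‖x i - a j₀‖ ≤ L i * √(edgeEnergy E1 E2 a x) :=
      (hconn.preconnected (Sum.inl i) (Sum.inr j₀)).norm_sub_le_dist_mul
        (norm_sub_le_sqrt_edgeEnergy_of_adj E1 E2 a x)
    have htri : ‖x i‖ ≤ ‖x i - a j₀‖ + ‖a j₀‖ := norm_le_norm_sub_add _ _
    have hsq : (L i * √(edgeEnergy E1 E2 a x)) ^ 2 = L i ^ 2 * edgeEnergy E1 E2 a x := by
      rw [mul_pow, Real.sq_sqrt hF]
    nlinarith [norm_nonneg (x i), norm_nonneg (x i - a j₀), sq_nonneg (‖x i - a j₀‖ - ‖a j₀‖)]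
  calc ∑ i, ‖x i‖ ^ 2 ≤ ∑ i, (2 * ‖a j₀‖ ^ 2 + 2 * L i ^ 2 * edgeEnergy E1 E2 a x) :=
        sum_le_sum fun i _ => hbound i
    _ = _ := by rw [sum_add_distrib, sum_mul]

theorem tendsto_edgeEnergy_atTop {ι : Type*} {l : Filter ι}
    (hconn : (SimpleGraph.fromRel (netRel N m E1 E2)).Connected) (hm : 1 ≤ m)
    {x : ι → Fin N → EuclideanSpace ℝ (Fin n)}
    (hx : Tendsto (fun k => ∑ i, ‖x k i‖ ^ 2) l atTop) :
    Tendsto (fun k => edgeEnergy E1 E2 a (x k)) l atTop := by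
  obtain ⟨c₁, c₂, hc⟩ := exists_sum_norm_sq_le_edgeEnergy E1 E2 a hconn ⟨0, hm⟩
  -- `c₂` may be `≤ 0`; the energy is nonnegative, so `|c₂| + 1` works in its place.
  have hpos : 0 < |c₂| + 1 := by positivity
  refine tendsto_atTop_mono (fun k => ?_)
    ((tendsto_atTop_add_const_right _ (-c₁) hx).atTop_div_const hpos)
  rw [div_le_iff₀ hpos]
  have := hc (x k)
  nlinarith [le_abs_self c₂, edgeEnergy_nonneg E1 E2 a (x k)]

theorem edgeEnergy_div_two_sub_le_objG (d1 : Fin N × Fin N → ℝ) (d2 : Fin N × Fin m → ℝ)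
    (hd1 : ∀ e ∈ E1, 0 ≤ d1 e) (hd2 : ∀ e ∈ E2, 0 ≤ d2 e)
    (x : Fin N → EuclideanSpace ℝ (Fin n))
    (u1 : Fin N × Fin N → EuclideanSpace ℝ (Fin n))
    (u2 : Fin N × Fin m → EuclideanSpace ℝ (Fin n))
    (hu1 : ∀ e ∈ E1, ‖u1 e‖ ≤ 1) (hu2 : ∀ e ∈ E2, ‖u2 e‖ ≤ 1) :
    edgeEnergy E1 E2 a x / 2 - ((∑ e ∈ E1, 2 * d1 e ^ 2) + ∑ e ∈ E2, 2 * d2 e ^ 2)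
      ≤ objG n N m E1 E2 a d1 d2 x u1 u2 := by
  have h1 := sum_le_sum fun e he => norm_sq_div_two_sub_le_of_norm_le_one (v := x e.1 - x e.2)
    (hd1 e he) (hu1 e he)
  have h2 := sum_le_sum fun e he => norm_sq_div_two_sub_le_of_norm_le_one (v := x e.1 - a e.2)
    (hd2 e he) (hu2 e he)
  rw [sum_sub_distrib, ← sum_div] at h1 h2
  rw [edgeEnergy, objG]
  linarith

end Network

theorem stmt7_general (n N m : ℕ)
    (E1 : Finset (Fin N × Fin N))
    (E2 : Finset (Fin N × Fin m))
    (a : Fin m → EuclideanSpace ℝ (Fin n))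
    (d1 : Fin N × Fin N → ℝ) (d2 : Fin N × Fin m → ℝ)
    (hd1 : ∀ e ∈ E1, 0 ≤ d1 e) (hd2 : ∀ e ∈ E2, 0 ≤ d2 e)
    (hconn : (SimpleGraph.fromRel (netRel N m E1 E2)).Connected)
    (hm : 1 ≤ m)
    (x : ℕ → Fin N → EuclideanSpace ℝ (Fin n))
    (u1 : ℕ → Fin N × Fin N → EuclideanSpace ℝ (Fin n))
    (u2 : ℕ → Fin N × Fin m → EuclideanSpace ℝ (Fin n))
    (hu1 : ∀ k, ∀ e ∈ E1, ‖u1 k e‖ ≤ 1)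
    (hu2 : ∀ k, ∀ e ∈ E2, ‖u2 k e‖ ≤ 1)
    (hnorm : Tendsto
      (fun k => Real.sqrt ((∑ i, ‖x k i‖ ^ 2) +
        ((∑ e ∈ E1, ‖u1 k e‖ ^ 2) + ∑ e ∈ E2, ‖u2 k e‖ ^ 2)))
      atTop atTop) :
    Tendsto (fun k => objG n N m E1 E2 a d1 d2 (x k) (u1 k) (u2 k))
      atTop atTop := by
  have htotal : Tendsto (fun k => (∑ i, ‖x k i‖ ^ 2) +
      ((∑ e ∈ E1, ‖u1 k e‖ ^ 2) + ∑ e ∈ E2, ‖u2 k e‖ ^ 2)) atTop atTop :=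
    (tendsto_pow_atTop two_ne_zero).comp hnorm |>.congr fun k =>
      Real.sq_sqrt (by positivity)
  have hx : Tendsto (fun k => ∑ i, ‖x k i‖ ^ 2) atTop atTop :=
    tendsto_atTop_mono (fun k => by
        linarith [sum_norm_sq_le_card (hu1 k), sum_norm_sq_le_card (hu2 k)])
      (tendsto_atTop_add_const_right _ (-((E1.card : ℝ) + E2.card)) htotal)
  have hlower : Tendsto (fun k => edgeEnergy E1 E2 a (x k) / 2 -
      ((∑ e ∈ E1, 2 * d1 e ^ 2) + ∑ e ∈ E2, 2 * d2 e ^ 2)) atTop atTop :=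
    tendsto_atTop_add_const_right _ _
      ((tendsto_edgeEnergy_atTop E1 E2 a hconn hm hx).atTop_div_const two_pos)
  exact tendsto_atTop_mono (fun k => edgeEnergy_div_two_sub_le_objG E1 E2 a d1 d2 hd1 hd2
    (x k) (u1 k) (u2 k) (hu1 k) (hu2 k)) hlower

/-- Proposition 2(iii): under Assumption 1, the constrained surrogate is
coercive: along any sequence of feasible pairs `(x^k, u^k)` (each `u^k_{ij}`
in the closed unit ball) whose norm tends to infinity, `G(x^k,u^k) → ∞`. -/
theorem stmt7 (n N m : ℕ) (hn : 1 ≤ n) (hN : 1 ≤ N)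
    (E1 : Finset (Fin N × Fin N)) (hE1 : ∀ e ∈ E1, e.1 < e.2)
    (E2 : Finset (Fin N × Fin m))
    (a : Fin m → EuclideanSpace ℝ (Fin n))
    (d1 : Fin N × Fin N → ℝ) (d2 : Fin N × Fin m → ℝ)
    (hd1 : ∀ e ∈ E1, 0 ≤ d1 e) (hd2 : ∀ e ∈ E2, 0 ≤ d2 e)
    (hconn : (SimpleGraph.fromRel (netRel N m E1 E2)).Connected)
    (hm : 1 ≤ m)
    (x : ℕ → Fin N → EuclideanSpace ℝ (Fin n))
    (u1 : ℕ → Fin N × Fin N → EuclideanSpace ℝ (Fin n))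
    (u2 : ℕ → Fin N × Fin m → EuclideanSpace ℝ (Fin n))
    (hu1 : ∀ k, ∀ e ∈ E1, ‖u1 k e‖ ≤ 1)
    (hu2 : ∀ k, ∀ e ∈ E2, ‖u2 k e‖ ≤ 1)
    (hnorm : Tendsto
      (fun k => Real.sqrt ((∑ i, ‖x k i‖ ^ 2) +
        ((∑ e ∈ E1, ‖u1 k e‖ ^ 2) + ∑ e ∈ E2, ‖u2 k e‖ ^ 2)))
      atTop atTop) :
    Tendsto (fun k => objG n N m E1 E2 a d1 d2 (x k) (u1 k) (u2 k))
      atTop atTop :=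
  stmt7_general n N m E1 E2 a d1 d2 hd1 hd2 hconn hm x u1 u2 hu1 hu2 hnorm
end

section
/- (Proposition 2(iv).) Under Assumption 1, the minimization problem min { G(x,u) : x ∈ (ℝⁿ)^N, u_{ij} ∈ B for every edge (i,j) ∈ E } attains its optimal value, i.e., there exist x* ∈ (ℝⁿ)^N and u* with u*_{ij} ∈ B for every edge such that G(x*,u*) ≤ G(x,u) for all x ∈ (ℝⁿ)^N and all u with u_{ij} ∈ B for every edge. -/
/-!
Minimizing `G` over the unit balls is explicit: for `d ≥ 0` and `‖u‖ ≤ 1`, Cauchy–Schwarz gives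
`‖v‖² - 2d⟪u, v⟫ ≥ (‖v‖ - d)² - d²`, with equality at `u = ‖v‖⁻¹ • v`. Hence
`G(x, u) ≥ stress x - Σ d²` with equality for these aligned directions, and it suffices to
minimize the continuous stress `Σ (‖x_i - x_j‖ - d_ij)²`. The stress is coercive: a bound on it
bounds every edge length, and as the graph is connected and has an anchor, every sensor lies
within `N + m` edges of that anchor.
-/

open scoped RealInnerProductSpace BigOperators
open Finset

section InnerProduct

variable {F : Type*} [NormedAddCommGroup F] [InnerProductSpace ℝ F]

lemma sq_norm_sub_sub_sq_le {d : ℝ} (hd : 0 ≤ d) {u v : F} (hu : ‖u‖ ≤ 1) :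
    (‖v‖ - d) ^ 2 - d ^ 2 ≤ ‖v‖ ^ 2 - 2 * d * ⟪u, v⟫ := by
  have h : ⟪u, v⟫ ≤ ‖v‖ :=
    (real_inner_le_norm u v).trans (mul_le_of_le_one_left (norm_nonneg v) hu)
  nlinarith

lemma sq_norm_sub_sub_sq_eq (d : ℝ) (v : F) :
    (‖v‖ - d) ^ 2 - d ^ 2 = ‖v‖ ^ 2 - 2 * d * ⟪‖v‖⁻¹ • v, v⟫ := by
  rcases eq_or_ne v 0 with rfl | hv
  · simp
  · rw [real_inner_smul_left, real_inner_self_eq_norm_sq]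
    field_simp
    ring

lemma norm_inv_norm_smul_le_one (v : F) : ‖‖v‖⁻¹ • v‖ ≤ 1 := by
  rcases eq_or_ne v 0 with rfl | hv
  · simp
  · exact (norm_smul_inv_norm hv).le

end InnerProduct

lemma le_abs_add_sqrt_of_sq_sub_le {r d s : ℝ} (h : (r - d) ^ 2 ≤ s) : r ≤ |d| + √s := by
  have := Real.abs_le_sqrt h
  linarith [le_abs_self d, le_abs_self (r - d)]

lemma dist_le_walk_length_mul {V X : Type*} [PseudoMetricSpace X]
    {G : SimpleGraph V} (p : V → X) {t : ℝ} (ht : ∀ v w, G.Adj v w → dist (p v) (p w) ≤ t)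
    {v w : V} (W : G.Walk v w) : dist (p v) (p w) ≤ W.length * t := by
  induction W with
  | nil => simp
  | @cons u v w h W ih =>
    calc dist (p u) (p w) ≤ dist (p u) (p v) + dist (p v) (p w) := dist_triangle _ _ _
    _ ≤ t + W.length * t := add_le_add (ht _ _ h) ih
    _ = (W.cons h).length * t := by rw [SimpleGraph.Walk.length_cons]; push_cast; ring

lemma dist_le_card_mul_of_connected {V X : Type*} [Fintype V] [PseudoMetricSpace X]
    {G : SimpleGraph V} (hG : G.Connected) (p : V → X) {t : ℝ} (ht₀ : 0 ≤ t)
    (ht : ∀ v w, G.Adj v w → dist (p v) (p w) ≤ t) (v w : V) :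
    dist (p v) (p w) ≤ Fintype.card V * t := by
  classical
  obtain ⟨W⟩ := hG.preconnected v w
  calc dist (p v) (p w) ≤ W.toPath.1.length * t := dist_le_walk_length_mul p ht W.toPath.1
    _ ≤ Fintype.card V * t := by
      gcongr
      exact W.toPath.2.length_lt.le

section Stress

variable {E : Type*} [NormedAddCommGroup E] {N m : ℕ}
  (E1 : Finset (Fin N × Fin N)) (E2 : Finset (Fin N × Fin m)) (a : Fin m → E)
  (d1 : Fin N × Fin N → ℝ) (d2 : Fin N × Fin m → ℝ)

noncomputable def stress (x : Fin N → E) : ℝ :=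
  (∑ e ∈ E1, (‖x e.1 - x e.2‖ - d1 e) ^ 2) + ∑ e ∈ E2, (‖x e.1 - a e.2‖ - d2 e) ^ 2

lemma continuous_stress : Continuous (stress E1 E2 a d1 d2) := by
  unfold stress
  fun_prop

lemma sq_norm_sub_sub_le_stress₁ (x : Fin N → E) {e : Fin N × Fin N} (he : e ∈ E1) :
    (‖x e.1 - x e.2‖ - d1 e) ^ 2 ≤ stress E1 E2 a d1 d2 x := by
  unfold stress
  exact le_add_of_le_of_nonneg
    (single_le_sum (f := fun e => (‖x e.1 - x e.2‖ - d1 e) ^ 2) (fun _ _ => sq_nonneg _) he)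
    (sum_nonneg fun _ _ => sq_nonneg _)

lemma sq_norm_sub_sub_le_stress₂ (x : Fin N → E) {e : Fin N × Fin m} (he : e ∈ E2) :
    (‖x e.1 - a e.2‖ - d2 e) ^ 2 ≤ stress E1 E2 a d1 d2 x := by
  unfold stress
  exact le_add_of_nonneg_of_le (sum_nonneg fun _ _ => sq_nonneg _)
    (single_le_sum (f := fun e => (‖x e.1 - a e.2‖ - d2 e) ^ 2) (fun _ _ => sq_nonneg _) he)

lemma netRel_adj_dist (x : Fin N → E) {p q : Fin N ⊕ Fin m}
    (h : (SimpleGraph.fromRel (netRel N m E1 E2)).Adj p q) :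
    (∃ e ∈ E1, dist (Sum.elim x a p) (Sum.elim x a q) = ‖x e.1 - x e.2‖) ∨
      ∃ e ∈ E2, dist (Sum.elim x a p) (Sum.elim x a q) = ‖x e.1 - a e.2‖ := by
  rcases p with i | j <;> rcases q with k | l <;>
    simp only [SimpleGraph.fromRel_adj, netRel, or_false, false_or, and_false] at h
  · rcases h.2 with h | h
    · exact .inl ⟨(i, k), h, dist_eq_norm _ _⟩
    · exact .inl ⟨(k, i), h, dist_eq_norm' _ _⟩
  · exact .inr ⟨(i, l), h.2, dist_eq_norm _ _⟩
  · exact .inr ⟨(k, j), h.2, dist_eq_norm' _ _⟩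

lemma dist_le_of_stress_le {x : Fin N → E} {s : ℝ} (hs : stress E1 E2 a d1 d2 x ≤ s)
    {p q : Fin N ⊕ Fin m} (h : (SimpleGraph.fromRel (netRel N m E1 E2)).Adj p q) :
    dist (Sum.elim x a p) (Sum.elim x a q) ≤ (∑ e ∈ E1, |d1 e|) + (∑ e ∈ E2, |d2 e|) + √s := by
  have hsum₁ := sum_nonneg (s := E1) fun e _ => abs_nonneg (d1 e)
  have hsum₂ := sum_nonneg (s := E2) fun e _ => abs_nonneg (d2 e)
  rcases netRel_adj_dist E1 E2 a x h with ⟨e, he, hpq⟩ | ⟨e, he, hpq⟩ <;> rw [hpq]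
  · have := le_abs_add_sqrt_of_sq_sub_le ((sq_norm_sub_sub_le_stress₁ E1 E2 a d1 d2 x he).trans hs)
    have := single_le_sum (f := fun e => |d1 e|) (fun _ _ => abs_nonneg _) he
    linarith
  · have := le_abs_add_sqrt_of_sq_sub_le ((sq_norm_sub_sub_le_stress₂ E1 E2 a d1 d2 x he).trans hs)
    have := single_le_sum (f := fun e => |d2 e|) (fun _ _ => abs_nonneg _) he
    linarith

lemma norm_le_of_stress_le (hG : (SimpleGraph.fromRel (netRel N m E1 E2)).Connected)
    (j₀ : Fin m) {x : Fin N → E} {s : ℝ} (hs : stress E1 E2 a d1 d2 x ≤ s) :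
    ‖x‖ ≤ ‖a j₀‖ + (N + m) * ((∑ e ∈ E1, |d1 e|) + (∑ e ∈ E2, |d2 e|) + √s) := by
  have hR : 0 ≤ (∑ e ∈ E1, |d1 e|) + (∑ e ∈ E2, |d2 e|) + √s := by positivity
  refine (pi_norm_le_iff_of_nonneg (by positivity)).2 fun i => ?_
  have h := dist_le_card_mul_of_connected hG (Sum.elim x a) hR
    (fun _ _ => dist_le_of_stress_le E1 E2 a d1 d2 hs) (.inl i) (.inr j₀)
  simp only [Sum.elim_inl, Sum.elim_inr, Fintype.card_sum, Fintype.card_fin, dist_eq_norm,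
    Nat.cast_add] at h
  linarith [norm_sub_norm_le (x i) (a j₀)]

lemma exists_forall_stress_le [NormedSpace ℝ E] [FiniteDimensional ℝ E]
    (hG : (SimpleGraph.fromRel (netRel N m E1 E2)).Connected) (j₀ : Fin m) :
    ∃ xs, ∀ x, stress E1 E2 a d1 d2 xs ≤ stress E1 E2 a d1 d2 x := by
  refine (continuous_stress E1 E2 a d1 d2).exists_forall_le' 0 ?_
  filter_upwards [tendsto_norm_cocompact_atTop.eventually_gt_atTop (‖a j₀‖ + (N + m) *
    ((∑ e ∈ E1, |d1 e|) + (∑ e ∈ E2, |d2 e|) + √(stress E1 E2 a d1 d2 0)))] with x hx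
  by_contra! h
  exact hx.not_ge (norm_le_of_stress_le E1 E2 a d1 d2 hG j₀ h.le)

end Stress

section Surrogate

variable {n N m : ℕ} {E1 : Finset (Fin N × Fin N)} {E2 : Finset (Fin N × Fin m)}
  {a : Fin m → EuclideanSpace ℝ (Fin n)} {d1 : Fin N × Fin N → ℝ} {d2 : Fin N × Fin m → ℝ}

lemma stress_sub_le_objG (hd1 : ∀ e ∈ E1, 0 ≤ d1 e) (hd2 : ∀ e ∈ E2, 0 ≤ d2 e)
    {x : Fin N → EuclideanSpace ℝ (Fin n)} {u1 : Fin N × Fin N → EuclideanSpace ℝ (Fin n)}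
    {u2 : Fin N × Fin m → EuclideanSpace ℝ (Fin n)}
    (hu1 : ∀ e ∈ E1, ‖u1 e‖ ≤ 1) (hu2 : ∀ e ∈ E2, ‖u2 e‖ ≤ 1) :
    stress E1 E2 a d1 d2 x - ((∑ e ∈ E1, d1 e ^ 2) + ∑ e ∈ E2, d2 e ^ 2) ≤
      objG n N m E1 E2 a d1 d2 x u1 u2 := by
  rw [stress, add_sub_add_comm, ← sum_sub_distrib, ← sum_sub_distrib, objG]
  exact add_le_add (sum_le_sum fun e he => sq_norm_sub_sub_sq_le (hd1 e he) (hu1 e he))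
    (sum_le_sum fun e he => sq_norm_sub_sub_sq_le (hd2 e he) (hu2 e he))

lemma objG_inv_norm_smul (x : Fin N → EuclideanSpace ℝ (Fin n)) :
    objG n N m E1 E2 a d1 d2 x (fun e => ‖x e.1 - x e.2‖⁻¹ • (x e.1 - x e.2))
        (fun e => ‖x e.1 - a e.2‖⁻¹ • (x e.1 - a e.2)) =
      stress E1 E2 a d1 d2 x - ((∑ e ∈ E1, d1 e ^ 2) + ∑ e ∈ E2, d2 e ^ 2) := by
  rw [stress, add_sub_add_comm, ← sum_sub_distrib, ← sum_sub_distrib, objG]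
  simp only [sq_norm_sub_sub_sq_eq]

end Surrogate

theorem stmt8_general (n N m : ℕ)
    (E1 : Finset (Fin N × Fin N))
    (E2 : Finset (Fin N × Fin m))
    (a : Fin m → EuclideanSpace ℝ (Fin n))
    (d1 : Fin N × Fin N → ℝ) (d2 : Fin N × Fin m → ℝ)
    (hd1 : ∀ e ∈ E1, 0 ≤ d1 e) (hd2 : ∀ e ∈ E2, 0 ≤ d2 e)
    (hconn : (SimpleGraph.fromRel (netRel N m E1 E2)).Connected)
    (hm : 1 ≤ m) :
    ∃ (xs : Fin N → EuclideanSpace ℝ (Fin n))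
      (us1 : Fin N × Fin N → EuclideanSpace ℝ (Fin n))
      (us2 : Fin N × Fin m → EuclideanSpace ℝ (Fin n)),
      (∀ e ∈ E1, ‖us1 e‖ ≤ 1) ∧ (∀ e ∈ E2, ‖us2 e‖ ≤ 1) ∧
      ∀ (x : Fin N → EuclideanSpace ℝ (Fin n))
        (u1 : Fin N × Fin N → EuclideanSpace ℝ (Fin n))
        (u2 : Fin N × Fin m → EuclideanSpace ℝ (Fin n)),
        (∀ e ∈ E1, ‖u1 e‖ ≤ 1) → (∀ e ∈ E2, ‖u2 e‖ ≤ 1) →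
        objG n N m E1 E2 a d1 d2 xs us1 us2 ≤
          objG n N m E1 E2 a d1 d2 x u1 u2 := by
  obtain ⟨xs, hxs⟩ := exists_forall_stress_le E1 E2 a d1 d2 hconn ⟨0, hm⟩
  refine ⟨xs, fun e => ‖xs e.1 - xs e.2‖⁻¹ • (xs e.1 - xs e.2),
    fun e => ‖xs e.1 - a e.2‖⁻¹ • (xs e.1 - a e.2), fun _ _ => norm_inv_norm_smul_le_one _,
    fun _ _ => norm_inv_norm_smul_le_one _, fun x u1 u2 hu1 hu2 => ?_⟩
  rw [objG_inv_norm_smul]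
  exact (sub_le_sub_right (hxs x) _).trans (stress_sub_le_objG hd1 hd2 hu1 hu2)

/-- Proposition 2(iv): under Assumption 1, the problem
`min { G(x,u) : x, u_{ij} ∈ B }` attains its optimal value. -/
theorem stmt8 (n N m : ℕ) (hn : 1 ≤ n) (hN : 1 ≤ N)
    (E1 : Finset (Fin N × Fin N)) (hE1 : ∀ e ∈ E1, e.1 < e.2)
    (E2 : Finset (Fin N × Fin m))
    (a : Fin m → EuclideanSpace ℝ (Fin n))
    (d1 : Fin N × Fin N → ℝ) (d2 : Fin N × Fin m → ℝ)
    (hd1 : ∀ e ∈ E1, 0 ≤ d1 e) (hd2 : ∀ e ∈ E2, 0 ≤ d2 e)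
    (hconn : (SimpleGraph.fromRel (netRel N m E1 E2)).Connected)
    (hm : 1 ≤ m) :
    ∃ (xs : Fin N → EuclideanSpace ℝ (Fin n))
      (us1 : Fin N × Fin N → EuclideanSpace ℝ (Fin n))
      (us2 : Fin N × Fin m → EuclideanSpace ℝ (Fin n)),
      (∀ e ∈ E1, ‖us1 e‖ ≤ 1) ∧ (∀ e ∈ E2, ‖us2 e‖ ≤ 1) ∧
      ∀ (x : Fin N → EuclideanSpace ℝ (Fin n))
        (u1 : Fin N × Fin N → EuclideanSpace ℝ (Fin n))
        (u2 : Fin N × Fin m → EuclideanSpace ℝ (Fin n)),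
        (∀ e ∈ E1, ‖u1 e‖ ≤ 1) → (∀ e ∈ E2, ‖u2 e‖ ≤ 1) →
        objG n N m E1 E2 a d1 d2 xs us1 us2 ≤
          objG n N m E1 E2 a d1 d2 x u1 u2 :=
  stmt8_general n N m E1 E2 a d1 d2 hd1 hd2 hconn hm
end

section
/- For every fixed u (assigning u_{ij} ∈ ℝⁿ to each edge), the function x ↦ G(x,u) on (ℝⁿ)^N is differentiable and its gradient is Lipschitz continuous with Lipschitz constant L = 2(2 d_max + m), where d_max = max_{i∈V} |N(i) ∩ V| is the maximal number of non-anchor neighbors over all non-anchor sensors. -/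
open scoped RealInnerProductSpace BigOperators NNReal
open Finset

/-- The space `(ℝⁿ)^N` of sensor configurations, with the Euclidean norm. -/
abbrev ConfSpace (n N : ℕ) := PiLp 2 (fun _ : Fin N => EuclideanSpace ℝ (Fin n))

/-!
Let `A` be the edge-incidence map `x ↦ ((x_i - x_j)_{(i,j) ∈ E1}, (x_i)_{(i,j) ∈ E2})`. Then
`G(x) = ‖A x - b‖² - 2⟪w, A x - b⟫` with `b` stacking the anchor positions and `w` stacking
the vectors `d_ij u_ij`, so the gradient `2 A†(A x - b - w)` is affine with linear part `2 A†A`,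
whose norm is `2‖A‖²`. Since `‖x_i - x_j‖² ≤ 2‖x_i‖² + 2‖x_j‖²`, counting edges at each vertex
gives `‖A x‖² ≤ Σ_i (2 deg_{E1} i + deg_{E2} i) ‖x_i‖² ≤ (2 d_max + m) ‖x‖²`.
-/

section
variable {E F : Type*} [NormedAddCommGroup E] [InnerProductSpace ℝ E] [CompleteSpace E]
  [NormedAddCommGroup F] [InnerProductSpace ℝ F] [CompleteSpace F]

theorem hasGradientAt_norm_sub_sq_sub_inner (A : E →L[ℝ] F) (c p : F) (x : E) :
    HasGradientAt (fun x => ‖A x - c‖ ^ 2 - 2 * ⟪p, A x - c⟫)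
      ((2 : ℝ) • A.adjoint (A x - c - p)) x := by
  rw [hasGradientAt_iff_hasFDerivAt]
  have hA : HasFDerivAt (fun x => A x - c) A x := A.hasFDerivAt.sub_const c
  refine (hA.norm_sq.sub (((hasFDerivAt_const p x).inner ℝ hA).const_mul 2)).congr_fderiv ?_
  ext w
  simp [fderivInnerCLM_apply, ContinuousLinearMap.adjoint_inner_left]
  ring

theorem lipschitzWith_gradient_norm_sub_sq_sub_inner (A : E →L[ℝ] F) (c p : F) :
    LipschitzWith (2 * ‖A‖₊ ^ 2) (gradient fun x => ‖A x - c‖ ^ 2 - 2 * ⟪p, A x - c⟫) := by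
  have hgrad : (gradient fun x => ‖A x - c‖ ^ 2 - 2 * ⟪p, A x - c⟫)
      = fun x => ((2 : ℝ) • (A.adjoint ∘L A)) x - (2 : ℝ) • A.adjoint (c + p) := by
    funext x
    rw [(hasGradientAt_norm_sub_sq_sub_inner A c p x).gradient]
    simp [smul_sub, sub_sub, map_sub, map_add]
  refine LipschitzWith.of_dist_le_mul fun x y => ?_
  rw [hgrad, dist_sub_right]
  convert ((2 : ℝ) • (A.adjoint ∘L A)).lipschitz.dist_le_mul x y using 2
  simp [norm_smul, ContinuousLinearMap.norm_adjoint_comp_self, sq]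
end

theorem sum_comp_eq_sum_card_fiber_mul {α ι : Type*} [Fintype ι] [DecidableEq ι] (s : Finset α)
    (g : α → ι) (f : ι → ℝ) : ∑ e ∈ s, f (g e) = ∑ i, #{e ∈ s | g e = i} * f i := by
  rw [← sum_fiberwise' s g f]
  simp

theorem card_filter_fst_eq_le {V W : Type*} [Fintype W] [DecidableEq V] (s : Finset (V × W))
    (i : V) : #{e ∈ s | e.1 = i} ≤ Fintype.card W :=
  card_le_card_of_injOn Prod.snd (fun _ _ => mem_univ _)
    fun e he e' he' h => Prod.ext (by simp_all) h

theorem norm_sub_sq_le_two_mul {E : Type*} [SeminormedAddCommGroup E] (a b : E) :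
    ‖a - b‖ ^ 2 ≤ 2 * (‖a‖ ^ 2 + ‖b‖ ^ 2) :=
  (pow_le_pow_left₀ (norm_nonneg _) (norm_sub_le a b) 2).trans add_sq_le

section
variable {V W F : Type*} [NormedAddCommGroup F] [InnerProductSpace ℝ F]

noncomputable def incidence (E1 : Finset (V × V)) (E2 : Finset (V × W)) :
    PiLp 2 (fun _ : V => F) →L[ℝ] PiLp 2 (fun _ : E1 ⊕ E2 => F) :=
  let π := PiLp.proj 2 (𝕜 := ℝ) (fun _ : V => F)
  (PiLp.continuousLinearEquiv 2 ℝ (fun _ : E1 ⊕ E2 => F)).symm.toContinuousLinearMap.comp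
    (ContinuousLinearMap.pi (φ := fun _ : E1 ⊕ E2 => F)
      (Sum.elim (fun e => π e.1.1 - π e.1.2) (fun e => π e.1.1)))

variable (E1 : Finset (V × V)) (E2 : Finset (V × W)) (x : PiLp 2 (fun _ : V => F))

@[simp] theorem incidence_apply_inl (e : E1) :
    incidence E1 E2 x (.inl e) = x e.1.1 - x e.1.2 := rfl

@[simp] theorem incidence_apply_inr (e : E2) : incidence E1 E2 x (.inr e) = x e.1.1 := rfl

theorem norm_incidence_apply_sq [Fintype V] :
    ‖incidence E1 E2 x‖ ^ 2 = ∑ e ∈ E1, ‖x e.1 - x e.2‖ ^ 2 + ∑ e ∈ E2, ‖x e.1‖ ^ 2 := by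
  rw [PiLp.norm_sq_eq_of_L2, Fintype.sum_sum_type]
  simp [sum_attach E1 (fun e => ‖x e.1 - x e.2‖ ^ 2), sum_attach E2 (fun e => ‖x e.1‖ ^ 2)]

theorem norm_incidence_apply_sq_le [Fintype V] [Fintype W] [DecidableEq V] (D : ℕ)
    (hdeg : ∀ i, #{e ∈ E1 | e.1 = i} + #{e ∈ E1 | e.2 = i} ≤ D) :
    ‖incidence E1 E2 x‖ ^ 2 ≤ (2 * D + Fintype.card W) * ‖x‖ ^ 2 := by
  calc ‖incidence E1 E2 x‖ ^ 2
      ≤ ∑ e ∈ E1, 2 * (‖x e.1‖ ^ 2 + ‖x e.2‖ ^ 2) + ∑ e ∈ E2, ‖x e.1‖ ^ 2 := by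
        rw [norm_incidence_apply_sq]
        gcongr with e
        exact norm_sub_sq_le_two_mul _ _
    _ = ∑ i, (2 * (#{e ∈ E1 | e.1 = i} + #{e ∈ E1 | e.2 = i} : ℝ) + #{e ∈ E2 | e.1 = i})
          * ‖x i‖ ^ 2 := by
        rw [← mul_sum, sum_add_distrib,
          sum_comp_eq_sum_card_fiber_mul E1 Prod.fst (fun i => ‖x i‖ ^ 2),
          sum_comp_eq_sum_card_fiber_mul E1 Prod.snd (fun i => ‖x i‖ ^ 2),
          sum_comp_eq_sum_card_fiber_mul E2 Prod.fst (fun i => ‖x i‖ ^ 2),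
          ← sum_add_distrib, mul_sum, ← sum_add_distrib]
        refine sum_congr rfl fun i _ => by ring
    _ ≤ ∑ i, (2 * D + Fintype.card W : ℝ) * ‖x i‖ ^ 2 := by
        gcongr with i
        · exact_mod_cast hdeg i
        · exact_mod_cast card_filter_fst_eq_le E2 i
    _ = (2 * D + Fintype.card W) * ‖x‖ ^ 2 := by
        rw [← mul_sum, PiLp.norm_sq_eq_of_L2]

theorem opNorm_incidence_sq_le [Fintype V] [Fintype W] [DecidableEq V] (D : ℕ)
    (hdeg : ∀ i, #{e ∈ E1 | e.1 = i} + #{e ∈ E1 | e.2 = i} ≤ D) :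
    ‖incidence (F := F) E1 E2‖ ^ 2 ≤ 2 * D + Fintype.card W := by
  have hK : (0 : ℝ) ≤ 2 * D + Fintype.card W := by positivity
  refine (Real.le_sqrt (norm_nonneg (incidence (F := F) E1 E2)) hK).1
    (ContinuousLinearMap.opNorm_le_bound _ (Real.sqrt_nonneg _) fun x => ?_)
  rw [← Real.sqrt_sq (norm_nonneg (incidence E1 E2 x)), ← Real.sqrt_sq (norm_nonneg x),
    ← Real.sqrt_mul hK]
  exact Real.sqrt_le_sqrt (norm_incidence_apply_sq_le E1 E2 x D hdeg)

end

theorem objG_eq_incidence {n N m : ℕ} (E1 : Finset (Fin N × Fin N))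
    (E2 : Finset (Fin N × Fin m)) (a : Fin m → EuclideanSpace ℝ (Fin n)) (d1 : Fin N × Fin N → ℝ) (d2 : Fin N × Fin m → ℝ)
    (u1 : Fin N × Fin N → EuclideanSpace ℝ (Fin n))
    (u2 : Fin N × Fin m → EuclideanSpace ℝ (Fin n)) (x : ConfSpace n N) :
    objG n N m E1 E2 a d1 d2 x u1 u2 =
      ‖incidence E1 E2 x - WithLp.toLp 2 (Sum.elim (fun _ => 0) fun e : E2 => a e.1.2)‖ ^ 2
        - 2 * ⟪WithLp.toLp 2 (Sum.elim (fun e : E1 => d1 e • u1 e) fun e : E2 => d2 e • u2 e),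
            incidence E1 E2 x - WithLp.toLp 2 (Sum.elim (fun _ => 0) fun e : E2 => a e.1.2)⟫ := by
  rw [PiLp.norm_sq_eq_of_L2, PiLp.inner_apply, mul_sum, ← sum_sub_distrib, Fintype.sum_sum_type]
  simp [objG, real_inner_smul_left, mul_assoc,
    sum_attach E1 (fun e => ‖x e.1 - x e.2‖ ^ 2 - 2 * (d1 e * ⟪u1 e, x e.1 - x e.2⟫)),
    sum_attach E2 (fun e => ‖x e.1 - a e.2‖ ^ 2 - 2 * (d2 e * ⟪u2 e, x e.1 - a e.2⟫))]

theorem stmt10_general (n N m : ℕ)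
    (E1 : Finset (Fin N × Fin N))
    (E2 : Finset (Fin N × Fin m))
    (a : Fin m → EuclideanSpace ℝ (Fin n))
    (d1 : Fin N × Fin N → ℝ) (d2 : Fin N × Fin m → ℝ)
    (u1 : Fin N × Fin N → EuclideanSpace ℝ (Fin n))
    (u2 : Fin N × Fin m → EuclideanSpace ℝ (Fin n))
    (dmax : ℕ)
    (hdmax : dmax = Finset.univ.sup (fun i : Fin N =>
      (E1.filter (fun e => e.1 = i)).card + (E1.filter (fun e => e.2 = i)).card)) :
    Differentiable ℝ
      (fun x : ConfSpace n N => objG n N m E1 E2 a d1 d2 x u1 u2) ∧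
    LipschitzWith ((2 * (2 * dmax + m) : ℕ) : ℝ≥0)
      (gradient (fun x : ConfSpace n N => objG n N m E1 E2 a d1 d2 x u1 u2)) := by
  have hdeg : ∀ i, #{e ∈ E1 | e.1 = i} + #{e ∈ E1 | e.2 = i} ≤ dmax := fun i =>
    hdmax ▸ le_sup (f := fun i => #{e ∈ E1 | e.1 = i} + #{e ∈ E1 | e.2 = i}) (mem_univ i)
  have hA := opNorm_incidence_sq_le (F := EuclideanSpace ℝ (Fin n)) E1 E2 dmax hdeg
  simp only [objG_eq_incidence]
  refine ⟨fun x => (hasGradientAt_norm_sub_sq_sub_inner _ _ _ x).differentiableAt,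
    (lipschitzWith_gradient_norm_sub_sq_sub_inner _ _ _).weaken ?_⟩
  rw [← NNReal.coe_le_coe]
  push_cast
  simp only [Fintype.card_fin] at hA
  linarith

/-- For every fixed `u`, the function `x ↦ G(x,u)` is differentiable and its
gradient is Lipschitz continuous with constant `L = 2(2 d_max + m)`, where
`d_max` is the maximal number of non-anchor neighbors over the non-anchor
sensors. -/
theorem stmt10 (n N m : ℕ) (hn : 1 ≤ n) (hN : 1 ≤ N)
    (E1 : Finset (Fin N × Fin N)) (hE1 : ∀ e ∈ E1, e.1 < e.2)
    (E2 : Finset (Fin N × Fin m))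
    (a : Fin m → EuclideanSpace ℝ (Fin n))
    (d1 : Fin N × Fin N → ℝ) (d2 : Fin N × Fin m → ℝ)
    (hd1 : ∀ e ∈ E1, 0 ≤ d1 e) (hd2 : ∀ e ∈ E2, 0 ≤ d2 e)
    (u1 : Fin N × Fin N → EuclideanSpace ℝ (Fin n))
    (u2 : Fin N × Fin m → EuclideanSpace ℝ (Fin n))
    (dmax : ℕ)
    (hdmax : dmax = Finset.univ.sup (fun i : Fin N =>
      (E1.filter (fun e => e.1 = i)).card + (E1.filter (fun e => e.2 = i)).card)) :
    Differentiable ℝ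
      (fun x : ConfSpace n N => objG n N m E1 E2 a d1 d2 x u1 u2) ∧
    LipschitzWith ((2 * (2 * dmax + m) : ℕ) : ℝ≥0)
      (gradient (fun x : ConfSpace n N => objG n N m E1 E2 a d1 d2 x u1 u2)) :=
  stmt10_general n N m E1 E2 a d1 d2 u1 u2 dmax hdmax
end
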